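/- arXiv:2001.01650 — 2 statements merged into one kernel-verified Lean document; each statement's English description precedes it below -/
import Mathlib

section
/- For every λ ∈ ℂ, there exists a nontrivial solution y of −y'' + q·y = λ²·y satisfying the periodic boundary conditions y(0) = y(1) and y'(0) = y'(1) if and only if Δ(λ) = 2. -/
/-!
Any solution `y` of `−y'' + q y = μ y` equals `y 0 • c + y' 0 • s`, so the map `y ↦ (y 0, y' 0)`
identifies the periodic solutions with the fixed vectors of the monodromy matrix
`M = [[c 1, s 1], [c' 1, s' 1]]`. The Wronskian of `c` and `s` is constant, hence `det M = 1`, and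
for a `2 × 2` matrix of determinant one `det (M - 1) = 2 - tr M`, which vanishes iff `Δ = tr M = 2`.
-/

/-- `IsSol q μ y yd` says that `y : ℝ → ℂ` is a (twice continuously differentiable)
solution of `−y'' + q·y = μ·y` on all of `ℝ`, with first derivative `yd`. -/
def IsSol (q : ℝ → ℂ) (μ : ℂ) (y yd : ℝ → ℂ) : Prop :=
  (∀ x : ℝ, HasDerivAt y (yd x) x) ∧
  (∀ x : ℝ, HasDerivAt yd (q x * y x - μ * y x) x)

open Matrix

theorem Matrix.exists_mulVec_eq_self_iff_trace_eq_two {K : Type*} [Field K]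
    {M : Matrix (Fin 2) (Fin 2) K} (hM : M.det = 1) :
    (∃ v ≠ 0, M *ᵥ v = v) ↔ M.trace = 2 := by
  have hdet : (M - 1).det = 2 - M.trace := by
    rw [det_fin_two] at hM
    rw [det_fin_two, trace_fin_two]
    simp only [sub_apply, one_apply_eq, one_apply_ne zero_ne_one, one_apply_ne one_ne_zero]
    linear_combination hM
  calc (∃ v ≠ 0, M *ᵥ v = v) ↔ ∃ v ≠ 0, (M - 1) *ᵥ v = 0 := by
        simp only [sub_mulVec, one_mulVec, sub_eq_zero]
    _ ↔ (M - 1).det = 0 := exists_mulVec_eq_zero_iff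
    _ ↔ M.trace = 2 := by rw [hdet, sub_eq_zero, eq_comm]

namespace IsSol

variable {q : ℝ → ℂ} {μ : ℂ} {y yd z zd : ℝ → ℂ}

theorem wronskian_eq (hy : IsSol q μ y yd) (hz : IsSol q μ z zd) (x : ℝ) :
    y x * zd x - z x * yd x = y 0 * zd 0 - z 0 * yd 0 := by
  have hW : ∀ t, HasDerivAt (fun u => y u * zd u - z u * yd u) 0 t := fun t =>
    (((hy.1 t).mul (hz.2 t)).sub ((hz.1 t).mul (hy.2 t))).congr_deriv (by ring)
  exact is_const_of_deriv_eq_zero (fun t => (hW t).differentiableAt) (fun t => (hW t).deriv) x 0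

theorem linear_combination (hy : IsSol q μ y yd) (hz : IsSol q μ z zd) (a b : ℂ) :
    IsSol q μ (fun x => a * y x + b * z x) (fun x => a * yd x + b * zd x) := by
  refine ⟨fun x => ((hy.1 x).const_mul a).add ((hz.1 x).const_mul b), fun x => ?_⟩
  exact (((hy.2 x).const_mul a).add ((hz.2 x).const_mul b)).congr_deriv (by ring)

theorem deriv_eq_zero_of_eq_zero (hy : IsSol q μ y yd) (h : y = 0) : yd = 0 := by
  funext x
  have hx := hy.1 x
  rw [h] at hx
  exact hx.unique (hasDerivAt_const x 0)

end IsSol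

structure IsFundamentalSystem (q : ℝ → ℂ) (μ : ℂ) (c cd s sd : ℝ → ℂ) : Prop where
  isSol_c : IsSol q μ c cd
  isSol_s : IsSol q μ s sd
  c_zero : c 0 = 1
  cd_zero : cd 0 = 0
  s_zero : s 0 = 0
  sd_zero : sd 0 = 1

def monodromy (c cd s sd : ℝ → ℂ) : Matrix (Fin 2) (Fin 2) ℂ :=
  !![c 1, s 1; cd 1, sd 1]

theorem monodromy_mulVec (c cd s sd : ℝ → ℂ) (v : Fin 2 → ℂ) :
    monodromy c cd s sd *ᵥ v = ![c 1 * v 0 + s 1 * v 1, cd 1 * v 0 + sd 1 * v 1] := by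
  rw [monodromy, mulVec_fin_two]
  rfl

namespace IsFundamentalSystem

variable {q : ℝ → ℂ} {μ : ℂ} {c cd s sd y yd : ℝ → ℂ}

theorem wronskian_eq_one (hF : IsFundamentalSystem q μ c cd s sd) (x : ℝ) :
    c x * sd x - s x * cd x = 1 := by
  simpa [hF.c_zero, hF.cd_zero, hF.s_zero, hF.sd_zero] using hF.isSol_c.wronskian_eq hF.isSol_s x

theorem eq_initial_combination (hF : IsFundamentalSystem q μ c cd s sd) (hy : IsSol q μ y yd)
    (x : ℝ) : y x = y 0 * c x + yd 0 * s x ∧ yd x = y 0 * cd x + yd 0 * sd x := by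
  have hWc := hy.wronskian_eq hF.isSol_c x
  have hWs := hy.wronskian_eq hF.isSol_s x
  have hW := hF.wronskian_eq_one x
  rw [hF.c_zero, hF.cd_zero] at hWc
  rw [hF.s_zero, hF.sd_zero] at hWs
  constructor
  · linear_combination c x * hWs - s x * hWc - y x * hW
  · linear_combination cd x * hWs - sd x * hWc - yd x * hW

theorem det_monodromy (hF : IsFundamentalSystem q μ c cd s sd) :
    (monodromy c cd s sd).det = 1 := by
  rw [monodromy, det_fin_two_of, hF.wronskian_eq_one]

theorem exists_periodic_iff (hF : IsFundamentalSystem q μ c cd s sd) :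
    (∃ y yd : ℝ → ℂ, IsSol q μ y yd ∧ y ≠ 0 ∧ y 0 = y 1 ∧ yd 0 = yd 1) ↔
      ∃ v ≠ 0, monodromy c cd s sd *ᵥ v = v := by
  constructor
  · rintro ⟨y, yd, hy, hy_ne, hper, hper'⟩
    refine ⟨![y 0, yd 0], fun hv => hy_ne ?_, ?_⟩
    · simp only [cons_eq_zero_iff, zero_empty, and_true] at hv
      funext x
      simp [(hF.eq_initial_combination hy x).1, hv]
    · obtain ⟨h1, h1'⟩ := hF.eq_initial_combination hy 1
      rw [monodromy_mulVec, cons_val_zero, cons_val_one, cons_val_zero]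
      exact vec2_eq (by linear_combination -h1 - hper) (by linear_combination -h1' - hper')
  · rintro ⟨v, hv_ne, hfix⟩
    rw [monodromy_mulVec] at hfix
    have hfix0 : c 1 * v 0 + s 1 * v 1 = v 0 := congrFun hfix 0
    have hfix1 : cd 1 * v 0 + sd 1 * v 1 = v 1 := congrFun hfix 1
    refine ⟨_, _, hF.isSol_c.linear_combination hF.isSol_s (v 0) (v 1), fun hy => hv_ne ?_, ?_, ?_⟩
    · have hyd := (hF.isSol_c.linear_combination hF.isSol_s (v 0) (v 1)).deriv_eq_zero_of_eq_zero hy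
      have h0 := congrFun hy 0
      have h0' := congrFun hyd 0
      simp only [hF.c_zero, hF.s_zero, hF.cd_zero, hF.sd_zero, Pi.zero_apply] at h0 h0'
      ext i
      fin_cases i
      · simpa using h0
      · simpa using h0'
    · simp only [hF.c_zero, hF.s_zero]
      linear_combination -hfix0
    · simp only [hF.cd_zero, hF.sd_zero]
      linear_combination -hfix1

end IsFundamentalSystem

theorem stmt6_general (q : ℝ → ℂ)
    (c s cd sd : ℂ → ℝ → ℂ)
    (hc : ∀ l : ℂ, IsSol q (l ^ 2) (c l) (cd l))
    (hs : ∀ l : ℂ, IsSol q (l ^ 2) (s l) (sd l))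
    (hc0 : ∀ l : ℂ, c l 0 = 1) (hcd0 : ∀ l : ℂ, cd l 0 = 0)
    (hs0 : ∀ l : ℂ, s l 0 = 0) (hsd0 : ∀ l : ℂ, sd l 0 = 1) (l : ℂ) :
    (∃ y yd : ℝ → ℂ, IsSol q (l ^ 2) y yd ∧ y ≠ 0 ∧ y 0 = y 1 ∧ yd 0 = yd 1) ↔
      c l 1 + sd l 1 = 2 := by
  have hF : IsFundamentalSystem q (l ^ 2) (c l) (cd l) (s l) (sd l) :=
    ⟨hc l, hs l, hc0 l, hcd0 l, hs0 l, hsd0 l⟩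
  rw [hF.exists_periodic_iff, exists_mulVec_eq_self_iff_trace_eq_two hF.det_monodromy, monodromy,
    trace_fin_two_of]

/-- A nontrivial periodic solution exists iff Δ(λ) = 2. -/
theorem stmt6 (q : ℝ → ℂ) (hq : Continuous q)
    (c s cd sd : ℂ → ℝ → ℂ)
    (hc : ∀ l : ℂ, IsSol q (l ^ 2) (c l) (cd l))
    (hs : ∀ l : ℂ, IsSol q (l ^ 2) (s l) (sd l))
    (hc0 : ∀ l : ℂ, c l 0 = 1) (hcd0 : ∀ l : ℂ, cd l 0 = 0)
    (hs0 : ∀ l : ℂ, s l 0 = 0) (hsd0 : ∀ l : ℂ, sd l 0 = 1) (l : ℂ) :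
    (∃ y yd : ℝ → ℂ, IsSol q (l ^ 2) y yd ∧ y ≠ 0 ∧ y 0 = y 1 ∧ yd 0 = yd 1) ↔
      c l 1 + sd l 1 = 2 :=
  stmt6_general q c s cd sd hc hs hc0 hcd0 hs0 hsd0 l
end

section
/- If q satisfies condition (B), then for every λ ∈ ℂ one has c'(1/2,λ) = −λ²·s(1/2,λ). -/
open Set

theorem intervalIntegral.integral_eq_zero_of_comp_sub_eq_neg {E : Type*} [NormedAddCommGroup E]
    [NormedSpace ℝ E] {f : ℝ → E} {a : ℝ} (hf : ∀ t, f (a - t) = -f t) :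
    ∫ t in (0 : ℝ)..a, f t = 0 := by
  have h := intervalIntegral.integral_comp_sub_left f (a := 0) (b := a) a
  simp only [hf, intervalIntegral.integral_neg, sub_self, sub_zero] at h
  have h2 : (2 : ℝ) • ∫ t in (0 : ℝ)..a, f t = 0 := by
    rw [two_smul]
    nth_rewrite 2 [← h]
    exact add_neg_cancel _
  simpa using h2

namespace Hill

noncomputable def oddPrimitive (q : ℝ → ℂ) (a x : ℝ) : ℂ :=
  ∫ t in a..x, (q t - q (a - t)) / 2

theorem hasDerivAt_oddPrimitive {q : ℝ → ℂ} (hq : Continuous q) (a x : ℝ) :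
    HasDerivAt (oddPrimitive q a) ((q x - q (a - x)) / 2) x := by
  have hodd : Continuous fun t => (q t - q (a - t)) / 2 := by fun_prop
  exact intervalIntegral.integral_hasDerivAt_right (hodd.intervalIntegrable _ _)
    hodd.aestronglyMeasurable.stronglyMeasurableAtFilter hodd.continuousAt

theorem oddPrimitive_self (q : ℝ → ℂ) (a : ℝ) : oddPrimitive q a a = 0 :=
  intervalIntegral.integral_same

theorem oddPrimitive_zero (q : ℝ → ℂ) (a : ℝ) : oddPrimitive q a 0 = 0 := by
  rw [oddPrimitive, intervalIntegral.integral_symm, neg_eq_zero]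
  refine intervalIntegral.integral_eq_zero_of_comp_sub_eq_neg fun t => ?_
  rw [sub_sub_cancel]
  ring

def reflInvariant (μ : ℂ) (σ y yd z zd : ℝ → ℂ) (a x : ℝ) : ℂ :=
  -μ * y x * z (a - x) + (zd (a - x) - σ x * z (a - x)) * (yd x - σ x * y x)

section Invariant

variable {q σ y yd z zd : ℝ → ℂ} {μ : ℂ} {a : ℝ}

theorem hasDerivAt_reflInvariant (hy : IsSol q μ y yd) (hz : IsSol q μ z zd)
    (hσ : ∀ x, HasDerivAt σ ((q x - q (a - x)) / 2) x) (x : ℝ) :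
    HasDerivAt (reflInvariant μ σ y yd z zd a)
      ((zd (a - x) * y x - z (a - x) * yd x) * ((q x + q (a - x)) / 2 - σ x ^ 2)) x := by
  have hz' := (hz.1 (a - x)).comp_const_sub a x
  have hzd' := (hz.2 (a - x)).comp_const_sub a x
  refine ((((hy.1 x).const_mul (-μ)).mul hz').add
    ((hzd'.sub ((hσ x).mul hz')).mul ((hy.2 x).sub ((hσ x).mul (hy.1 x))))).congr_deriv ?_
  simp only [Pi.mul_apply, Pi.sub_apply]
  ring

theorem reflInvariant_eq (hy : IsSol q μ y yd) (hz : IsSol q μ z zd)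
    (hσ : ∀ x, HasDerivAt σ ((q x - q (a - x)) / 2) x)
    (hB : ∀ x ∈ Icc 0 a, (q x + q (a - x)) / 2 = σ x ^ 2) (ha : 0 ≤ a) :
    reflInvariant μ σ y yd z zd a a = reflInvariant μ σ y yd z zd a 0 := by
  have hderiv := hasDerivAt_reflInvariant hy hz hσ
  refine constant_of_has_deriv_right_zero (fun x _ => (hderiv x).continuousAt.continuousWithinAt)
    (fun x hx => ?_) a ⟨ha, le_rfl⟩
  simpa [hB x (Ico_subset_Icc_self hx)] using (hderiv x).hasDerivWithinAt

end Invariant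

end Hill

/-- Condition (B) implies c'(1/2,λ) = −λ²·s(1/2,λ) for all λ. -/
theorem stmt13 (q : ℝ → ℂ) (hq : Continuous q)
    (c s cd sd : ℂ → ℝ → ℂ)
    (hc : ∀ l : ℂ, IsSol q (l ^ 2) (c l) (cd l))
    (hs : ∀ l : ℂ, IsSol q (l ^ 2) (s l) (sd l))
    (hc0 : ∀ l : ℂ, c l 0 = 1) (hcd0 : ∀ l : ℂ, cd l 0 = 0)
    (hs0 : ∀ l : ℂ, s l 0 = 0) (hsd0 : ∀ l : ℂ, sd l 0 = 1)
    (hB : ∀ x ∈ Set.Icc (0 : ℝ) (1/2),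
      (q x + q (1/2 - x)) / 2 = (∫ t in (1/2 : ℝ)..x, (q t - q (1/2 - t)) / 2) ^ 2) :
    ∀ l : ℂ, cd l (1/2) = -l ^ 2 * s l (1/2) := by
  intro l
  have h := Hill.reflInvariant_eq (hc l) (hs l) (Hill.hasDerivAt_oddPrimitive hq (1/2)) hB
    (by norm_num)
  simpa [Hill.reflInvariant, Hill.oddPrimitive_self, Hill.oddPrimitive_zero, hc0, hcd0, hs0,
    hsd0] using h
end
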